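/- Define matrices D_+^{(n)} of size 2^n-by-2^n over ℝ by the recurrence: D_+^{(0)} = [0] (the 1-by-1 zero matrix), and D_+^{(n+1)} = (1/2)·[[D_+^{(n)}, 0],[I, D_+^{(n)}]] in 2-by-2 block form (so D_+^{(n)} is the transpose of D_−^{(n)}). Then for every n ≥ 0, every 0 ≤ k < 2^n, and every x ∈ (0,1], Σ_{j=1}^∞ 2^{−j}·H_{n,k}((x − 2^{−j})·ε_j(x)) + ∫_x^1 H_{n,k}(t) dt = Σ_{l=0}^{2^n−1} (D_+^{(n)})_{l,k} · H_{n,l}(x). In particular P_+ = C_+ + L' maps each Haar scale subspace W_n = span{H_{n,l} : 0 ≤ l < 2^n} into itself, with matrix D_+^{(n)} in the basis (H_{n,l}). -/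

import Mathlib

open MeasureTheory Set Matrix

noncomputable section

/-- The `k`-th binary digit of `x ∈ (0,1]`: `ε_k(x) = (⌈2^k x⌉ − 1) mod 2`. -/
def eps (k : ℕ) (x : ℝ) : ℤ := (⌈(2 : ℝ) ^ k * x⌉ - 1) % 2

/-- Identification `Fin (2^n) ⊕ Fin (2^n) ≃ Fin (2^(n+1))` (first summand first). -/
def blockEquiv (n : ℕ) : Fin (2 ^ n) ⊕ Fin (2 ^ n) ≃ Fin (2 ^ (n + 1)) :=
  finSumFinEquiv.trans (finCongr (by rw [pow_succ]; omega))

/-- `D_+^{(0)} = [0]`, `D_+^{(n+1)} = (1/2)·[[D_+^{(n)}, 0],[I, D_+^{(n)}]]`. -/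
def Dplus : (n : ℕ) → Matrix (Fin (2 ^ n)) (Fin (2 ^ n)) ℝ
  | 0 => 0
  | n + 1 => Matrix.reindex (blockEquiv n) (blockEquiv n)
      ((1 / 2 : ℝ) • Matrix.fromBlocks (Dplus n) 0 1 (Dplus n))

/-- The mother Haar function `H = χ_{(0,1/2]} − χ_{(1/2,1]}`. -/
def HaarH (x : ℝ) : ℝ :=
  Set.indicator (Set.Ioc 0 (1 / 2)) 1 x - Set.indicator (Set.Ioc (1 / 2) 1) 1 x

/-- `H_{n,k}(x) = 2^{n/2} H(2^n x − k)`. -/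
def HaarNK (n k : ℕ) (x : ℝ) : ℝ := Real.sqrt 2 ^ n * HaarH ((2 : ℝ) ^ n * x - k)

/-!
Both sides are computed by induction on the scale `n`. For `h` supported in `(0,1]`, the digit
shifts `ε_{j+1}(x) = ε_j(2x)` and `ε_{j+1}(x) = ε_j(2x - 1)` (for `j ≥ 1`) make `P_+`
self-similar: on the half of `(0,1]` that carries `h(2·)` or `h(2·-1)`, `P_+` acts as `P_+[h]`
rescaled by `1/2`, while on the other half only the first term of `C_+[h(2·)]`, respectively the
mean `∫ h` in `L'[h(2·-1)]`, survives. Since `H_{n+1,k}` and `H_{n+1,2^n+k}` are `√2` times the two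
halves of `H_{n,k}`, and these have mean zero, this is the block recursion of `D_+`. In the base
case `H = 𝟙(2·) - 𝟙(2·-1)` with `𝟙` the indicator of `(0,1]`, and `P_+[𝟙] = 1` on `(0,1]` is the
binary expansion `x = Σ_j ε_j(x) 2^{-j}`.
-/

lemma eps_eq_zero_or_eq_one (k : ℕ) (x : ℝ) : eps k x = 0 ∨ eps k x = 1 :=
  Int.emod_two_eq _

lemma eps_succ (k : ℕ) (x : ℝ) : eps (k + 1) x = eps k (2 * x) := by
  rw [eps, eps, pow_succ, mul_assoc]

lemma eps_sub_one {k : ℕ} (hk : k ≠ 0) (x : ℝ) : eps k (x - 1) = eps k x := by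
  obtain ⟨m, hm⟩ : (2 : ℤ) ∣ 2 ^ k := dvd_pow_self 2 hk
  have : (2 : ℝ) ^ k * (x - 1) = 2 ^ k * x - ((2 ^ k : ℤ) : ℝ) := by push_cast; ring
  rw [eps, eps, this, Int.ceil_sub_intCast, hm]
  omega

lemma eps_one_of_le_half {x : ℝ} (hx : x ∈ Ioc 0 (1 / 2)) : eps 1 x = 0 := by
  have : ⌈(2 : ℝ) ^ 1 * x⌉ = 1 := by
    rw [Int.ceil_eq_iff]; constructor <;> norm_num <;> linarith [hx.1, hx.2]
  rw [eps, this]; rfl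

lemma eps_one_of_half_lt {x : ℝ} (hx : x ∈ Ioc (1 / 2) 1) : eps 1 x = 1 := by
  have : ⌈(2 : ℝ) ^ 1 * x⌉ = 2 := by
    rw [Int.ceil_eq_iff]; constructor <;> norm_num <;> linarith [hx.1, hx.2]
  rw [eps, this]; rfl

lemma inv_two_pow_lt_of_eps_eq_one {k : ℕ} {x : ℝ} (hx : 0 < x) (h : eps k x = 1) :
    ((2 : ℝ) ^ k)⁻¹ < x := by
  have hpos : 0 < ⌈(2 : ℝ) ^ k * x⌉ := Int.ceil_pos.2 (by positivity)
  have htwo : 1 < ⌈(2 : ℝ) ^ k * x⌉ := by rw [eps] at h; omega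
  rw [inv_lt_iff_one_lt_mul₀' (by positivity)]
  exact_mod_cast Int.lt_ceil.1 htwo

lemma ceil_two_pow_succ_mul_sub_one (m : ℕ) (x : ℝ) :
    ⌈(2 : ℝ) ^ (m + 1) * x⌉ - 1 = 2 * (⌈(2 : ℝ) ^ m * x⌉ - 1) + eps (m + 1) x := by
  have hup : ⌈(2 : ℝ) ^ (m + 1) * x⌉ ≤ 2 * ⌈(2 : ℝ) ^ m * x⌉ := by
    rw [Int.ceil_le, pow_succ]; push_cast; linarith [Int.le_ceil ((2 : ℝ) ^ m * x)]
  have hlow : 2 * ⌈(2 : ℝ) ^ m * x⌉ - 2 < ⌈(2 : ℝ) ^ (m + 1) * x⌉ := by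
    rw [Int.lt_ceil, pow_succ]; push_cast; linarith [Int.ceil_lt_add_one ((2 : ℝ) ^ m * x)]
  rw [eps]
  omega

theorem hasSum_eps {x : ℝ} (hx : x ∈ Ioc 0 1) :
    HasSum (fun j : ℕ => ((2 : ℝ) ^ (j + 1))⁻¹ * eps (j + 1) x) x := by
  set r : ℕ → ℝ := fun m => (⌈(2 : ℝ) ^ m * x⌉ - 1) / 2 ^ m
  have hstep (j : ℕ) : ((2 : ℝ) ^ (j + 1))⁻¹ * eps (j + 1) x = r (j + 1) - r j := by
    have := congrArg (fun z : ℤ => (z : ℝ)) (ceil_two_pow_succ_mul_sub_one j x)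
    push_cast at this
    simp only [r, this]
    field_simp
    ring
  have hr0 : r 0 = 0 := by
    have : ⌈x⌉ = 1 := Int.ceil_eq_iff.2 ⟨by norm_num [hx.1], by exact_mod_cast hx.2⟩
    simp [r, this]
  have hnonneg (j : ℕ) : 0 ≤ ((2 : ℝ) ^ (j + 1))⁻¹ * eps (j + 1) x := by
    rcases eps_eq_zero_or_eq_one (j + 1) x with h | h <;> simp [h]
  rw [hasSum_iff_tendsto_nat_of_nonneg hnonneg]
  simp only [hstep, Finset.sum_range_sub, hr0, sub_zero]
  have hlim : Filter.Tendsto (fun m : ℕ => x - ((2 : ℝ) ^ m)⁻¹) Filter.atTop (nhds x) := by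
    simpa using (tendsto_const_nhds (x := x)).sub
      (tendsto_inv_atTop_zero.comp (tendsto_pow_atTop_atTop_of_one_lt (one_lt_two (α := ℝ))))
  refine tendsto_of_tendsto_of_tendsto_of_le_of_le hlim tendsto_const_nhds (fun m => ?_)
    (fun m => ?_)
  · simp only [r, le_div_iff₀ (by positivity : (0 : ℝ) < 2 ^ m), sub_mul,
      inv_mul_cancel₀ (by positivity : (2 : ℝ) ^ m ≠ 0)]
    linarith [Int.le_ceil ((2 : ℝ) ^ m * x)]
  · simp only [r, div_le_iff₀ (by positivity : (0 : ℝ) < 2 ^ m)]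
    linarith [Int.ceil_lt_add_one ((2 : ℝ) ^ m * x)]

def Cplus (f : ℝ → ℝ) (x : ℝ) : ℝ :=
  ∑' j : ℕ, ((2 : ℝ) ^ (j + 1))⁻¹ * f ((x - ((2 : ℝ) ^ (j + 1))⁻¹) * eps (j + 1) x)

def Pplus (f : ℝ → ℝ) (x : ℝ) : ℝ := Cplus f x + ∫ t in x..1, f t

lemma summable_Cplus {f : ℝ → ℝ} {M : ℝ} (hf : ∀ y, |f y| ≤ M) (x : ℝ) :
    Summable fun j : ℕ =>
      ((2 : ℝ) ^ (j + 1))⁻¹ * f ((x - ((2 : ℝ) ^ (j + 1))⁻¹) * eps (j + 1) x) := by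
  refine Summable.of_norm_bounded (g := fun j : ℕ => M / 2 / 2 ^ j) (summable_geometric_two' M)
    (fun j => ?_)
  rw [norm_mul, norm_inv, norm_pow, Real.norm_ofNat, Real.norm_eq_abs, pow_succ]
  calc ((2 : ℝ) ^ j * 2)⁻¹ * |f _| ≤ ((2 : ℝ) ^ j * 2)⁻¹ * M := by gcongr; exact hf _
    _ = M / 2 / 2 ^ j := by ring

lemma Pplus_const_mul (c : ℝ) (f : ℝ → ℝ) (x : ℝ) :
    Pplus (fun t => c * f t) x = c * Pplus f x := by
  simp only [Pplus, Cplus, mul_left_comm _ c, tsum_mul_left, intervalIntegral.integral_const_mul,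
    mul_add]

lemma Pplus_sub {f g : ℝ → ℝ} {M x : ℝ} (hfM : ∀ y, |f y| ≤ M) (hgM : ∀ y, |g y| ≤ M)
    (hf : IntervalIntegrable f volume x 1) (hg : IntervalIntegrable g volume x 1) :
    Pplus (fun t => f t - g t) x = Pplus f x - Pplus g x := by
  simp only [Pplus, Cplus, mul_sub, intervalIntegral.integral_sub hf hg,
    (summable_Cplus hfM x).tsum_sub (summable_Cplus hgM x)]
  ring

lemma tsum_eq_tsum_succ_of_eq_zero {f : ℕ → ℝ} (hf : f 0 = 0) :
    ∑' j, f j = ∑' j, f (j + 1) :=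
  (tsum_pnat_eq_tsum_of_eq_zero hf).symm.trans tsum_pnat_eq_tsum_succ

section SelfSimilarity

variable {h : ℝ → ℝ} {x : ℝ}

lemma Cplus_comp_two_mul_of_le_half (h0 : h 0 = 0) (hx : x ∈ Ioc 0 (1 / 2)) :
    Cplus (fun t => h (2 * t)) x = Cplus h (2 * x) / 2 := by
  rw [Cplus, tsum_eq_tsum_succ_of_eq_zero (by simp [eps_one_of_le_half hx, h0]), Cplus,
    ← tsum_div_const]
  refine tsum_congr fun j => ?_
  rw [eps_succ (j + 1)]
  ring_nf

lemma Cplus_comp_two_mul_of_half_lt (hsupp : Function.support h ⊆ Ioc 0 1)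
    (hx : x ∈ Ioc (1 / 2) 1) : Cplus (fun t => h (2 * t)) x = h (2 * x - 1) / 2 := by
  have hvanish := Function.support_subset_iff'.1 hsupp
  rw [Cplus, tsum_eq_single 0 fun j hj => ?_]
  · rw [eps_one_of_half_lt hx]
    ring_nf
  obtain ⟨i, rfl⟩ := Nat.exists_eq_add_one_of_ne_zero hj
  rcases eps_eq_zero_or_eq_one (i + 1 + 1) x with he | he
  · simp [he, hvanish 0 (by simp)]
  · have hlt : ((2 : ℝ) ^ (i + 1))⁻¹ < 2 * x - 1 := by
      rw [eps_succ, ← eps_sub_one (by omega)] at he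
      exact inv_two_pow_lt_of_eps_eq_one (by linarith [hx.1]) he
    rw [he, hvanish _ fun hy => hy.2.not_gt ?_, mul_zero]
    rw [Int.cast_one, mul_one, pow_succ _ (i + 1), mul_inv]
    linarith

lemma Cplus_comp_two_mul_sub_one_of_le_half (hsupp : Function.support h ⊆ Ioc 0 1)
    (hx : x ≤ 1 / 2) : Cplus (fun t => h (2 * t - 1)) x = 0 := by
  have hvanish := Function.support_subset_iff'.1 hsupp
  refine (tsum_congr fun j => ?_).trans tsum_zero
  dsimp only
  rw [hvanish _ fun hy => hy.1.not_ge ?_, mul_zero]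
  have : (0 : ℝ) < ((2 : ℝ) ^ (j + 1))⁻¹ := by positivity
  rcases eps_eq_zero_or_eq_one (j + 1) x with he | he
  · simp [he]
  · rw [he, Int.cast_one, mul_one]
    linarith

lemma Cplus_comp_two_mul_sub_one_of_half_lt (hsupp : Function.support h ⊆ Ioc 0 1)
    (hx : x ∈ Ioc (1 / 2) 1) :
    Cplus (fun t => h (2 * t - 1)) x = Cplus h (2 * x - 1) / 2 := by
  have hvanish := Function.support_subset_iff'.1 hsupp
  rw [Cplus, tsum_eq_tsum_succ_of_eq_zero ?_, Cplus, ← tsum_div_const]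
  · refine tsum_congr fun j => ?_
    rw [eps_succ (j + 1), ← eps_sub_one (by omega)]
    rcases eps_eq_zero_or_eq_one (j + 1) (2 * x - 1) with he | he
    · simp [he, hvanish 0 (by simp), hvanish (-1) (by simp)]
    · rw [he]
      ring_nf
  · rw [eps_one_of_half_lt hx, hvanish _ fun hy => hy.1.not_ge (by norm_num; linarith [hx.2]),
      mul_zero]

lemma integral_comp_two_mul (hsupp : Function.support h ⊆ Ioc 0 1) (hint : Integrable h) :
    ∫ t in x..1, h (2 * t) = (∫ t in (2 * x)..1, h t) / 2 := by
  have hzero : ∫ t in (1 : ℝ)..2, h t = 0 :=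
    intervalIntegral.integral_zero_ae (ae_of_all _ fun t ht =>
      Function.support_subset_iff'.1 hsupp t fun h' => by
        rw [uIoc_of_le one_le_two] at ht; linarith [ht.1, h'.2])
  rw [intervalIntegral.integral_comp_mul_left _ two_ne_zero, mul_one,
    ← intervalIntegral.integral_add_adjacent_intervals hint.intervalIntegrable
      hint.intervalIntegrable, hzero, add_zero, smul_eq_mul, inv_mul_eq_div]

lemma integral_comp_two_mul_eq_zero_of_half_le (hsupp : Function.support h ⊆ Ioc 0 1)
    (hx : 1 / 2 ≤ x) : ∫ t in x..1, h (2 * t) = 0 :=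
  intervalIntegral.integral_zero_ae (ae_of_all _ fun t ht =>
    Function.support_subset_iff'.1 hsupp _ fun h' => by
      linarith [ht.1, le_min hx (by norm_num : (1 : ℝ) / 2 ≤ 1), h'.2])

lemma integral_comp_two_mul_sub_one :
    ∫ t in x..1, h (2 * t - 1) = (∫ t in (2 * x - 1)..1, h t) / 2 := by
  rw [intervalIntegral.integral_comp_mul_sub _ two_ne_zero, smul_eq_mul, inv_mul_eq_div]
  norm_num

theorem Pplus_comp_two_mul_of_le_half (hsupp : Function.support h ⊆ Ioc 0 1)
    (hint : Integrable h) (hx : x ∈ Ioc 0 (1 / 2)) :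
    Pplus (fun t => h (2 * t)) x = Pplus h (2 * x) / 2 := by
  rw [Pplus, Pplus,
    Cplus_comp_two_mul_of_le_half (Function.support_subset_iff'.1 hsupp 0 (by simp)) hx,
    integral_comp_two_mul hsupp hint, add_div]

theorem Pplus_comp_two_mul_of_half_lt (hsupp : Function.support h ⊆ Ioc 0 1)
    (hx : x ∈ Ioc (1 / 2) 1) : Pplus (fun t => h (2 * t)) x = h (2 * x - 1) / 2 := by
  rw [Pplus, Cplus_comp_two_mul_of_half_lt hsupp hx,
    integral_comp_two_mul_eq_zero_of_half_le hsupp hx.1.le, add_zero]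

theorem Pplus_comp_two_mul_sub_one_of_le_half (hsupp : Function.support h ⊆ Ioc 0 1)
    (hx : x ≤ 1 / 2) : Pplus (fun t => h (2 * t - 1)) x = (∫ t, h t) / 2 := by
  rw [Pplus, Cplus_comp_two_mul_sub_one_of_le_half hsupp hx, integral_comp_two_mul_sub_one,
    intervalIntegral.integral_eq_integral_of_support_subset
      (hsupp.trans (Ioc_subset_Ioc (by linarith) le_rfl)), zero_add]

theorem Pplus_comp_two_mul_sub_one_of_half_lt (hsupp : Function.support h ⊆ Ioc 0 1)
    (hx : x ∈ Ioc (1 / 2) 1) :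
    Pplus (fun t => h (2 * t - 1)) x = Pplus h (2 * x - 1) / 2 := by
  rw [Pplus, Pplus, Cplus_comp_two_mul_sub_one_of_half_lt hsupp hx, integral_comp_two_mul_sub_one,
    add_div]

end SelfSimilarity

lemma integrable_indicator_Ioc_one (a b : ℝ) : Integrable ((Ioc a b).indicator (1 : ℝ → ℝ)) :=
  (integrableOn_const measure_Ioc_lt_top.ne).integrable_indicator measurableSet_Ioc

theorem Pplus_indicator_Ioc {x : ℝ} (hx : x ∈ Ioc 0 1) :
    Pplus ((Ioc (0 : ℝ) 1).indicator 1) x = 1 := by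
  have hC : Cplus ((Ioc (0 : ℝ) 1).indicator 1) x = x := by
    refine (tsum_congr fun j => ?_).trans (hasSum_eps hx).tsum_eq
    rcases eps_eq_zero_or_eq_one (j + 1) x with he | he
    · simp [he]
    · have hlt := inv_two_pow_lt_of_eps_eq_one hx.1 he
      have hpos : (0 : ℝ) < ((2 : ℝ) ^ (j + 1))⁻¹ := by positivity
      have hmem : x - ((2 : ℝ) ^ (j + 1))⁻¹ ∈ Ioc (0 : ℝ) 1 := ⟨by linarith, by linarith [hx.2]⟩
      simp [he, hmem]
  have hL : ∫ t in x..1, (Ioc (0 : ℝ) 1).indicator 1 t = 1 - x := by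
    rw [intervalIntegral.integral_congr (g := fun _ => (1 : ℝ)) fun t ht => ?_]
    · simp
    · rw [uIcc_of_le hx.2] at ht
      have hmem : t ∈ Ioc (0 : ℝ) 1 := ⟨by linarith [hx.1, ht.1], ht.2⟩
      simp [hmem]
  rw [Pplus, hC, hL]
  ring

lemma HaarH_eq_indicator_sub (t : ℝ) :
    HaarH t = (Ioc (0 : ℝ) 1).indicator 1 (2 * t) - (Ioc (0 : ℝ) 1).indicator 1 (2 * t - 1) := by
  have h1 : 2 * t ∈ Ioc (0 : ℝ) 1 ↔ t ∈ Ioc (0 : ℝ) (1 / 2) := by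
    simp only [mem_Ioc]; constructor <;> rintro ⟨h, h'⟩ <;> constructor <;> linarith
  have h2 : 2 * t - 1 ∈ Ioc (0 : ℝ) 1 ↔ t ∈ Ioc (1 / 2 : ℝ) 1 := by
    simp only [mem_Ioc]; constructor <;> rintro ⟨h, h'⟩ <;> constructor <;> linarith
  simp only [HaarH, indicator_apply, h1, h2, Pi.one_apply]

lemma support_HaarH : Function.support HaarH ⊆ Ioc 0 1 :=
  (Function.support_sub _ _).trans (union_subset
    (support_indicator_subset.trans (Ioc_subset_Ioc le_rfl (by norm_num)))
    (support_indicator_subset.trans (Ioc_subset_Ioc (by norm_num) le_rfl)))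

lemma integrable_HaarH : Integrable HaarH :=
  (integrable_indicator_Ioc_one _ _).sub (integrable_indicator_Ioc_one _ _)

lemma integral_HaarH : ∫ t, HaarH t = 0 := by
  simp only [HaarH]
  rw [integral_sub (integrable_indicator_Ioc_one _ _) (integrable_indicator_Ioc_one _ _),
    integral_indicator_one measurableSet_Ioc, integral_indicator_one measurableSet_Ioc,
    Real.volume_real_Ioc, Real.volume_real_Ioc]
  norm_num

lemma support_HaarNK {n k : ℕ} (hk : k < 2 ^ n) : Function.support (HaarNK n k) ⊆ Ioc 0 1 := by
  intro t ht
  have hmem : 2 ^ n * t - k ∈ Ioc (0 : ℝ) 1 := support_HaarH (right_ne_zero_of_mul ht)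
  have hk' : (k : ℝ) + 1 ≤ 2 ^ n := by exact_mod_cast hk
  have hpos : (0 : ℝ) < 2 ^ n := by positivity
  constructor <;> nlinarith [hmem.1, hmem.2, (k.cast_nonneg : (0 : ℝ) ≤ k)]

lemma integrable_HaarNK (n k : ℕ) : Integrable (HaarNK n k) :=
  ((integrable_HaarH.comp_sub_right (k : ℝ)).comp_mul_left' (by positivity)).const_mul _

lemma integral_HaarNK (n k : ℕ) : ∫ t, HaarNK n k t = 0 := by
  simp [HaarNK, integral_const_mul, Measure.integral_comp_mul_left (fun s => HaarH (s - k)),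
    integral_sub_right_eq_self, integral_HaarH]

lemma HaarNK_succ_left (n k : ℕ) :
    HaarNK (n + 1) k = fun t => Real.sqrt 2 * HaarNK n k (2 * t) := by
  ext t
  simp only [HaarNK, pow_succ]
  ring_nf

lemma HaarNK_succ_right (n k : ℕ) :
    HaarNK (n + 1) (2 ^ n + k) = fun t => Real.sqrt 2 * HaarNK n k (2 * t - 1) := by
  ext t
  simp only [HaarNK, pow_succ]
  push_cast
  ring_nf

theorem Pplus_HaarH {x : ℝ} (hx : x ∈ Ioc 0 1) : Pplus HaarH x = 0 := by
  set g := (Ioc (0 : ℝ) 1).indicator (1 : ℝ → ℝ)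
  have hg : Function.support g ⊆ Ioc 0 1 := support_indicator_subset
  have hgM (y : ℝ) : |g y| ≤ 1 := by
    by_cases hy : y ∈ Ioc (0 : ℝ) 1 <;> simp [g, hy]
  have hint : Integrable g := integrable_indicator_Ioc_one 0 1
  rw [funext HaarH_eq_indicator_sub, Pplus_sub (fun y => hgM _) (fun y => hgM _)
    (hint.comp_mul_left' two_ne_zero).intervalIntegrable
    ((hint.comp_sub_right 1).comp_mul_left' two_ne_zero).intervalIntegrable]
  rcases le_or_gt x (1 / 2) with hx2 | hx2
  · rw [Pplus_comp_two_mul_of_le_half hg hint ⟨hx.1, hx2⟩,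
      Pplus_comp_two_mul_sub_one_of_le_half hg hx2,
      Pplus_indicator_Ioc ⟨by linarith [hx.1], by linarith⟩,
      integral_indicator_one measurableSet_Ioc]
    simp
  · rw [Pplus_comp_two_mul_of_half_lt hg ⟨hx2, hx.2⟩,
      Pplus_comp_two_mul_sub_one_of_half_lt hg ⟨hx2, hx.2⟩,
      Pplus_indicator_Ioc ⟨by linarith, by linarith [hx.2]⟩]
    have hmem : 2 * x - 1 ∈ Ioc (0 : ℝ) 1 := ⟨by linarith, by linarith [hx.2]⟩
    simp [g, hmem]

lemma blockEquiv_inl_val (n : ℕ) (i : Fin (2 ^ n)) : (blockEquiv n (Sum.inl i) : ℕ) = i := by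
  simp [blockEquiv]

lemma blockEquiv_inr_val (n : ℕ) (i : Fin (2 ^ n)) :
    (blockEquiv n (Sum.inr i) : ℕ) = 2 ^ n + i := by
  simp [blockEquiv]
  omega

lemma Dplus_succ_blockEquiv (n : ℕ) (a b : Fin (2 ^ n) ⊕ Fin (2 ^ n)) :
    Dplus (n + 1) (blockEquiv n a) (blockEquiv n b) =
      fromBlocks (Dplus n) 0 1 (Dplus n) a b / 2 := by
  simp [Dplus, div_eq_inv_mul]

lemma sum_Dplus_succ_inl_mul_HaarNK (n : ℕ) (k : Fin (2 ^ n)) (x : ℝ) :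
    ∑ l, Dplus (n + 1) l (blockEquiv n (Sum.inl k)) * HaarNK (n + 1) l x =
      Real.sqrt 2 / 2 * ((∑ l, Dplus n l k * HaarNK n l (2 * x)) + HaarNK n k (2 * x - 1)) := by
  rw [← (blockEquiv n).sum_comp, Fintype.sum_sum_type]
  simp only [Dplus_succ_blockEquiv, fromBlocks_apply₁₁, fromBlocks_apply₂₁, Matrix.one_apply,
    blockEquiv_inl_val, blockEquiv_inr_val, HaarNK_succ_right]
  simp only [HaarNK_succ_left, ite_div, ite_mul, zero_div, zero_mul, Finset.sum_ite_eq',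
    Finset.mem_univ, if_true, mul_add, Finset.mul_sum]
  congr 1
  · exact Finset.sum_congr rfl fun _ _ => by ring
  · ring

lemma sum_Dplus_succ_inr_mul_HaarNK (n : ℕ) (k : Fin (2 ^ n)) (x : ℝ) :
    ∑ l, Dplus (n + 1) l (blockEquiv n (Sum.inr k)) * HaarNK (n + 1) l x =
      Real.sqrt 2 / 2 * ∑ l, Dplus n l k * HaarNK n l (2 * x - 1) := by
  rw [← (blockEquiv n).sum_comp, Fintype.sum_sum_type]
  simp only [Dplus_succ_blockEquiv, fromBlocks_apply₁₂, fromBlocks_apply₂₂, Matrix.zero_apply,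
    zero_div, zero_mul, Finset.sum_const_zero, zero_add, blockEquiv_inr_val, HaarNK_succ_right,
    Finset.mul_sum]
  exact Finset.sum_congr rfl fun _ _ => by ring

theorem Pplus_HaarNK (n : ℕ) (k : Fin (2 ^ n)) {x : ℝ} (hx : x ∈ Ioc 0 1) :
    Pplus (HaarNK n k) x = ∑ l, Dplus n l k * HaarNK n l x := by
  induction n generalizing x with
  | zero =>
    have hH : HaarNK 0 0 = HaarH := by ext t; simp [HaarNK]
    simp [hH, Pplus_HaarH hx, Dplus]
  | succ n ih =>
    have hvanish (l : Fin (2 ^ n)) := Function.support_subset_iff'.1 (support_HaarNK l.isLt)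
    have hsupp (l : Fin (2 ^ n)) := support_HaarNK l.isLt
    obtain ⟨b | b, rfl⟩ := (blockEquiv n).surjective k
    · rw [blockEquiv_inl_val, HaarNK_succ_left, Pplus_const_mul, sum_Dplus_succ_inl_mul_HaarNK]
      rcases le_or_gt x (1 / 2) with hx2 | hx2
      · rw [Pplus_comp_two_mul_of_le_half (hsupp b) (integrable_HaarNK _ _) ⟨hx.1, hx2⟩,
          ih b ⟨by linarith [hx.1], by linarith⟩, hvanish b _ fun hy => hy.1.not_ge (by linarith)]
        ring
      · rw [Pplus_comp_two_mul_of_half_lt (hsupp b) ⟨hx2, hx.2⟩, Finset.sum_eq_zero fun l _ => by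
          rw [hvanish l _ fun hy => hy.2.not_gt (by linarith), mul_zero]]
        ring
    · rw [blockEquiv_inr_val, HaarNK_succ_right, Pplus_const_mul, sum_Dplus_succ_inr_mul_HaarNK]
      rcases le_or_gt x (1 / 2) with hx2 | hx2
      · rw [Pplus_comp_two_mul_sub_one_of_le_half (hsupp b) hx2, integral_HaarNK,
          Finset.sum_eq_zero fun l _ => by
            rw [hvanish l _ fun hy => hy.1.not_ge (by linarith), mul_zero]]
        ring
      · rw [Pplus_comp_two_mul_sub_one_of_half_lt (hsupp b) ⟨hx2, hx.2⟩,
          ih b ⟨by linarith, by linarith [hx.2]⟩]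
        ring

lemma two_zpow_neg_succ (j : ℕ) : (2 : ℝ) ^ (-((j : ℤ) + 1)) = ((2 : ℝ) ^ (j + 1))⁻¹ := by
  rw [_root_.zpow_neg, ← Nat.cast_succ, zpow_natCast]

/-- `P_+[H_{n,k}] = C_+[H_{n,k}] + L'[H_{n,k}] = Σ_l (D_+^{(n)})_{l,k} H_{n,l}` pointwise on
`(0,1]`: the operator `P_+ = C_+ + L'` maps each Haar scale subspace `W_n` into itself,
with matrix `D_+^{(n)}`. -/
theorem stmt10 (n : ℕ) (k : Fin (2 ^ n)) (x : ℝ) (hx : x ∈ Set.Ioc (0 : ℝ) 1) :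
    (∑' j : ℕ, (2 : ℝ) ^ (-((j : ℤ) + 1)) *
        HaarNK n k ((x - (2 : ℝ) ^ (-((j : ℤ) + 1))) * (eps (j + 1) x : ℝ))) +
      (∫ t in x..(1 : ℝ), HaarNK n k t) =
      ∑ l : Fin (2 ^ n), Dplus n l k * HaarNK n l x := by
  simpa only [Pplus, Cplus, two_zpow_neg_succ] using Pplus_HaarNK n k hx
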